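/- Let Ω ⊆ ℝⁿ be a nonempty closed convex set, F : ℝⁿ → ℝⁿ continuous and monotone on Ω, and let φ : ℝⁿ → ℝ ∪ {+∞} be convex with effective domain Ω and continuous on Ω, satisfying 0 ∈ ri(dom ∂φ − Ω). If x ∈ Ω belongs to S₀ but not to S_φ, then x ∉ S_ε for every ε > 0. -/

import Mathlib

open Set Pointwise
open scoped InnerProductSpace

/-- The (convex) subdifferential of φ (viewed as the extended function equal to φ on
Ω and +∞ outside of Ω, so that its effective domain is Ω). -/
def subdiffOn {n : ℕ} (Ω : Set (EuclideanSpace ℝ (Fin n)))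
    (φ : EuclideanSpace ℝ (Fin n) → ℝ) (x : EuclideanSpace ℝ (Fin n)) :
    Set (EuclideanSpace ℝ (Fin n)) :=
  {v | x ∈ Ω ∧ ∀ y ∈ Ω, φ x + ⟪v, y - x⟫_ℝ ≤ φ y}

/-! A point `x ∈ S_ε` with witness `v` already satisfies the defining inequality of `S_φ`:
for `z ∈ S₀`, monotonicity gives the Minty inequality `⟪F x, z - x⟫ ≤ 0`, so
`ε ⟪v, z - x⟫ ≥ -⟪F x, z - x⟫ ≥ 0`. -/

section

variable {E : Type*} [NormedAddCommGroup E] [InnerProductSpace ℝ E]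

theorem inner_sub_nonneg_of_monotone_of_solution {Ω : Set E} {F : E → E}
    (hF : ∀ x ∈ Ω, ∀ y ∈ Ω, 0 ≤ ⟪F x - F y, x - y⟫_ℝ) {x z : E} (hx : x ∈ Ω) (hz : z ∈ Ω)
    (hzsol : ∀ y ∈ Ω, 0 ≤ ⟪F z, y - z⟫_ℝ) : 0 ≤ ⟪F x, x - z⟫_ℝ := by
  have hmono := hF x hx z hz
  rw [inner_sub_left] at hmono
  linarith [hzsol x hx]

theorem inner_nonneg_of_inner_add_smul_nonneg {a v w : E} {ε : ℝ} (hε : 0 < ε)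
    (h : 0 ≤ ⟪a + ε • v, w⟫_ℝ) (ha : ⟪a, w⟫_ℝ ≤ 0) : 0 ≤ ⟪v, w⟫_ℝ := by
  rw [inner_add_left, real_inner_smul_left] at h
  nlinarith

theorem inner_nonneg_of_regularized_solution {Ω : Set E} {F : E → E}
    (hF : ∀ x ∈ Ω, ∀ y ∈ Ω, 0 ≤ ⟪F x - F y, x - y⟫_ℝ) {x v : E} {ε : ℝ} (hε : 0 < ε)
    (hx : x ∈ Ω) (hxε : ∀ z ∈ Ω, 0 ≤ ⟪F x + ε • v, z - x⟫_ℝ) {z : E} (hz : z ∈ Ω)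
    (hzsol : ∀ y ∈ Ω, 0 ≤ ⟪F z, y - z⟫_ℝ) : 0 ≤ ⟪v, z - x⟫_ℝ := by
  have hminty := inner_sub_nonneg_of_monotone_of_solution hF hx hz hzsol
  refine inner_nonneg_of_inner_add_smul_nonneg hε (hxε z hz) ?_
  rw [← neg_sub, inner_neg_right]
  linarith

end

theorem not_in_Seps_of_in_S0_not_in_Sphi_general {n : ℕ}
    (Ω : Set (EuclideanSpace ℝ (Fin n)))
    (F : EuclideanSpace ℝ (Fin n) → EuclideanSpace ℝ (Fin n))
    (hFmono : ∀ x ∈ Ω, ∀ y ∈ Ω, 0 ≤ ⟪F x - F y, x - y⟫_ℝ)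
    (φ : EuclideanSpace ℝ (Fin n) → ℝ)
    (x : EuclideanSpace ℝ (Fin n)) (hxΩ : x ∈ Ω)
    -- x ∉ S_φ
    (hxSphi : ¬ ∃ v ∈ subdiffOn Ω φ x,
      ∀ z, (z ∈ Ω ∧ ∀ y ∈ Ω, 0 ≤ ⟪F z, y - z⟫_ℝ) → 0 ≤ ⟪v, z - x⟫_ℝ) :
    ∀ ε : ℝ, 0 < ε →
      ¬ ∃ v ∈ subdiffOn Ω φ x, ∀ z ∈ Ω, 0 ≤ ⟪F x + ε • v, z - x⟫_ℝ := by
  rintro ε hε ⟨v, hv, hxε⟩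
  exact hxSphi ⟨v, hv, fun z ⟨hz, hzsol⟩ =>
    inner_nonneg_of_regularized_solution hFmono hε hxΩ hxε hz hzsol⟩

/-- if x ∈ Ω belongs to S₀ but not to S_φ, then x ∉ S_ε for every
ε > 0. -/
theorem not_in_Seps_of_in_S0_not_in_Sphi {n : ℕ}
    (Ω : Set (EuclideanSpace ℝ (Fin n)))
    (hne : Ω.Nonempty) (hcl : IsClosed Ω) (hconv : Convex ℝ Ω)
    (F : EuclideanSpace ℝ (Fin n) → EuclideanSpace ℝ (Fin n))
    (hFcont : ContinuousOn F Ω)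
    (hFmono : ∀ x ∈ Ω, ∀ y ∈ Ω, 0 ≤ ⟪F x - F y, x - y⟫_ℝ)
    (φ : EuclideanSpace ℝ (Fin n) → ℝ)
    (hφconv : ConvexOn ℝ Ω φ) (hφcont : ContinuousOn φ Ω)
    -- 0 ∈ ri(dom ∂φ − Ω)
    (hri : (0 : EuclideanSpace ℝ (Fin n)) ∈
      intrinsicInterior ℝ ({x | (subdiffOn Ω φ x).Nonempty} - Ω))
    (x : EuclideanSpace ℝ (Fin n)) (hxΩ : x ∈ Ω)
    -- x ∈ S₀
    (hxS0 : ∀ y ∈ Ω, 0 ≤ ⟪F x, y - x⟫_ℝ)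
    -- x ∉ S_φ
    (hxSphi : ¬ ∃ v ∈ subdiffOn Ω φ x,
      ∀ z, (z ∈ Ω ∧ ∀ y ∈ Ω, 0 ≤ ⟪F z, y - z⟫_ℝ) → 0 ≤ ⟪v, z - x⟫_ℝ) :
    ∀ ε : ℝ, 0 < ε →
      ¬ ∃ v ∈ subdiffOn Ω φ x, ∀ z ∈ Ω, 0 ≤ ⟪F x + ε • v, z - x⟫_ℝ :=
  not_in_Seps_of_in_S0_not_in_Sphi_general Ω F hFmono φ x hxΩ hxSphi
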